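/- Let G be an ample Hausdorff groupoid. Then the centraliser of the diagonal subalgebra A_R(G⁽⁰⁾) in the Steinberg algebra A_R(G) equals A_R(Iso(G)°). -/
import Mathlib

open CategoryTheory

abbrev GE (C : Type*) [Groupoid C] := Σ a b : C, a ⟶ b

namespace GE

variable {C : Type*} [Groupoid C]

def srcU (g : GE C) : GE C := ⟨g.1, g.1, 𝟙 g.1⟩
def ranU (g : GE C) : GE C := ⟨g.2.1, g.2.1, 𝟙 g.2.1⟩
def unitSpace (C : Type*) [Groupoid C] : Set (GE C) := {g | ∃ a : C, g = ⟨a, a, 𝟙 a⟩}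
def isoSet (C : Type*) [Groupoid C] : Set (GE C) := {g | srcU g = ranU g}
def gmul (g₁ g₂ : GE C) (h : g₂.2.1 = g₁.1) : GE C :=
  ⟨g₂.1, g₁.2.1, g₂.2.2 ≫ eqToHom h ≫ g₁.2.2⟩
def ginv (g : GE C) : GE C := ⟨g.2.1, g.1, Groupoid.inv g.2.2⟩
def setMul (U V : Set (GE C)) : Set (GE C) :=
  {x | ∃ g₁ ∈ U, ∃ g₂ ∈ V, ∃ h : g₂.2.1 = g₁.1, x = gmul g₁ g₂ h}
def IsBisection (V : Set (GE C)) : Prop := Set.InjOn srcU V ∧ Set.InjOn ranU V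

section Top

variable [TopologicalSpace (GE C)]

/-- `G` is a topological groupoid: inversion and composition are continuous. -/
def IsTopologicalGroupoid (C : Type*) [Groupoid C] [TopologicalSpace (GE C)] : Prop :=
  Continuous (fun g : GE C => ginv g) ∧
    Continuous (fun p : {p : GE C × GE C // p.2.2.1 = p.1.1} => gmul p.1.1 p.1.2 p.2)

/-- A compact open bisection. -/
def IsCompactOpenBisection (V : Set (GE C)) : Prop :=
  IsCompact V ∧ IsOpen V ∧ IsBisection V

/-- `G` is ample: étale (the source map is a local homeomorphism) with a basis of
compact open bisections. -/
def IsAmple (C : Type*) [Groupoid C] [TopologicalSpace (GE C)] : Prop :=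
  IsLocalHomeomorph (fun g : GE C => srcU g) ∧
    TopologicalSpace.IsTopologicalBasis {V : Set (GE C) | IsCompactOpenBisection V}

variable (R : Type*) [CommRing R]

/-- The Steinberg algebra carrier: locally constant compactly supported functions. -/
def steinbergSet (C : Type*) [Groupoid C] [TopologicalSpace (GE C)] (R : Type*) [CommRing R] :
    Set (GE C → R) :=
  {f | IsLocallyConstant f ∧ HasCompactSupport f}

/-- Convolution: `(f * g)(x) = ∑_{x = g₁ g₂} f(g₁) g(g₂)`. -/
noncomputable def conv (f g : GE C → R) : GE C → R := fun x =>
  ∑ᶠ p ∈ {p : GE C × GE C | ∃ h : p.2.2.1 = p.1.1, gmul p.1 p.2 h = x}, f p.1 * g p.2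

/-- The subalgebra `A_R(S)` of Steinberg functions supported in a subset `S` of arrows. -/
def AOf (S : Set (GE C)) : Set (GE C → R) :=
  {f | f ∈ steinbergSet C R ∧ Function.support f ⊆ S}

/-- A subset `U` of the unit space is invariant if `s(g) ∈ U ↔ r(g) ∈ U`. -/
def IsInvariant (U : Set (GE C)) : Prop := ∀ g : GE C, srcU g ∈ U ↔ ranU g ∈ U

end Top

end GE

namespace GE

variable {C : Type*} [Groupoid C]

lemma gmul_src' (x : GE C) : gmul x (srcU x) rfl = x := by
  obtain ⟨a, b, φ⟩ := x; simp [gmul, srcU]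

lemma gmul_ran' (x : GE C) : gmul (ranU x) x rfl = x := by
  obtain ⟨a, b, φ⟩ := x; simp [gmul, ranU]

lemma unit_mul_right {x : GE C} {p₁ p₂ : GE C} (h : p₂.2.1 = p₁.1)
    (hu : p₂ ∈ unitSpace C) (hx : gmul p₁ p₂ h = x) : p₁ = x ∧ p₂ = srcU x := by
  obtain ⟨a, rfl⟩ := hu
  simp only at h
  subst h
  obtain ⟨c, d, ψ⟩ := p₁
  simp only at *
  subst hx
  simp [gmul, srcU]

lemma unit_mul_left {x : GE C} {p₁ p₂ : GE C} (h : p₂.2.1 = p₁.1)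
    (hu : p₁ ∈ unitSpace C) (hx : gmul p₁ p₂ h = x) : p₂ = x ∧ p₁ = ranU x := by
  obtain ⟨a, rfl⟩ := hu
  obtain ⟨c, d, ψ⟩ := p₂
  simp only at h
  subst h
  subst hx
  simp [gmul, ranU]

lemma srcU_mem_unit (x : GE C) : srcU x ∈ unitSpace C := ⟨x.1, rfl⟩
lemma ranU_mem_unit (x : GE C) : ranU x ∈ unitSpace C := ⟨x.2.1, rfl⟩

variable [TopologicalSpace (GE C)] (R : Type*) [CommRing R]

lemma conv_diag_right (f g : GE C → R) (hg : Function.support g ⊆ unitSpace C) (x : GE C) :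
    conv R f g x = f x * g (srcU x) := by
  unfold conv
  rw [finsum_mem_def, finsum_eq_single _ ((x, srcU x) : GE C × GE C)]
  · rw [Set.indicator_of_mem]
    exact ⟨rfl, gmul_src' x⟩
  · rintro ⟨p₁, p₂⟩ hp
    by_cases hmem : (p₁, p₂) ∈ {p : GE C × GE C | ∃ h : p.2.2.1 = p.1.1, gmul p.1 p.2 h = x}
    · rw [Set.indicator_of_mem hmem]
      obtain ⟨h, hx⟩ := hmem
      by_cases hg2 : g p₂ = 0
      · simp [hg2]
      · exfalso
        obtain ⟨e1, e2⟩ := unit_mul_right h (hg hg2) hx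
        exact hp (Prod.ext e1 e2)
    · rw [Set.indicator_of_notMem hmem]

lemma conv_diag_left (f g : GE C → R) (hg : Function.support g ⊆ unitSpace C) (x : GE C) :
    conv R g f x = g (ranU x) * f x := by
  unfold conv
  rw [finsum_mem_def, finsum_eq_single _ ((ranU x, x) : GE C × GE C)]
  · rw [Set.indicator_of_mem]
    exact ⟨rfl, gmul_ran' x⟩
  · rintro ⟨p₁, p₂⟩ hp
    by_cases hmem : (p₁, p₂) ∈ {p : GE C × GE C | ∃ h : p.2.2.1 = p.1.1, gmul p.1 p.2 h = x}
    · rw [Set.indicator_of_mem hmem]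
      obtain ⟨h, hx⟩ := hmem
      by_cases hg1 : g p₁ = 0
      · simp [hg1]
      · exfalso
        obtain ⟨e1, e2⟩ := unit_mul_left h (hg hg1) hx
        exact hp (Prod.ext e2 e1)
    · rw [Set.indicator_of_notMem hmem]

lemma unit_open (ham : IsAmple C) : IsOpen (unitSpace C) := by
  rw [isOpen_iff_mem_nhds]
  rintro u ⟨a, rfl⟩
  have h := ham.1.map_nhds_eq (⟨a, a, 𝟙 a⟩ : GE C)
  have hsrc : srcU (⟨a, a, 𝟙 a⟩ : GE C) = ⟨a, a, 𝟙 a⟩ := rfl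
  rw [hsrc] at h
  rw [← h, Filter.mem_map]
  have : (fun g : GE C => srcU g) ⁻¹' unitSpace C = Set.univ := by
    ext g; simp [srcU_mem_unit]
  rw [this]
  exact Filter.univ_mem

end GE

/-- The centraliser of the diagonal `A_R(G⁽⁰⁾)` in the Steinberg algebra `A_R(G)`
equals `A_R(Iso(G)°)`. -/
theorem centralizer_diagonal_eq_core {C : Type*} [Groupoid C]
    [TopologicalSpace (GE C)] [T2Space (GE C)] [LocallyCompactSpace (GE C)]
    (htg : GE.IsTopologicalGroupoid C) (ham : GE.IsAmple C)
    (R : Type*) [CommRing R] :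
    {f : GE C → R | f ∈ GE.steinbergSet C R ∧
        ∀ g ∈ GE.AOf R (GE.unitSpace C), GE.conv R f g = GE.conv R g f} =
      GE.AOf R (interior (GE.isoSet C)) := by
  classical
  ext f
  constructor
  · rintro ⟨hf, hcomm⟩
    refine ⟨hf, ?_⟩
    -- first: support f ⊆ isoSet
    have hiso : Function.support f ⊆ GE.isoSet C := by
      intro x hx
      by_contra hne
      -- srcU x ≠ ranU x
      have hne' : GE.srcU x ≠ GE.ranU x := hne
      obtain ⟨O₁, O₂, hO₁, hO₂, hs, hr, hdisj⟩ := t2_separation hne'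
      have hopen : IsOpen (O₁ ∩ GE.unitSpace C) := hO₁.inter (GE.unit_open ham)
      obtain ⟨V, hVb, hVmem, hVsub⟩ := ham.2.exists_subset_of_mem_open
        (⟨hs, GE.srcU_mem_unit x⟩ : GE.srcU x ∈ O₁ ∩ GE.unitSpace C) hopen
      obtain ⟨hVc, hVo, _⟩ := hVb
      set g : GE C → R := fun y => if y ∈ V then (1 : R) else 0 with hgdef
      have hgsupp : Function.support g ⊆ GE.unitSpace C := by
        intro y hy
        by_cases hyV : y ∈ V
        · exact (hVsub hyV).2
        · simp [hgdef, hyV] at hy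
      have hglc : IsLocallyConstant g := by
        intro s
        by_cases h1 : (1 : R) ∈ s <;> by_cases h0 : (0 : R) ∈ s
        · have : g ⁻¹' s = Set.univ := by
            ext y; by_cases hyV : y ∈ V <;> simp [hgdef, hyV, h1, h0]
          rw [this]; exact isOpen_univ
        · have : g ⁻¹' s = V := by
            ext y; by_cases hyV : y ∈ V <;> simp [hgdef, hyV, h1, h0]
          rw [this]; exact hVo
        · have : g ⁻¹' s = Vᶜ := by
            ext y; by_cases hyV : y ∈ V <;> simp [hgdef, hyV, h1, h0]
          rw [this]; exact hVc.isClosed.isOpen_compl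
        · have : g ⁻¹' s = ∅ := by
            ext y; by_cases hyV : y ∈ V <;> simp [hgdef, hyV, h1, h0]
          rw [this]; exact isOpen_empty
      have hgcs : HasCompactSupport g := by
        apply HasCompactSupport.intro hVc
        intro y hy; simp [hgdef, hy]
      have hg : g ∈ GE.AOf R (GE.unitSpace C) := ⟨⟨hglc, hgcs⟩, hgsupp⟩
      have heq := congrFun (hcomm g hg) x
      rw [GE.conv_diag_right R f g hgsupp x, GE.conv_diag_left R f g hgsupp x] at heq
      have hgs : g (GE.srcU x) = 1 := by simp [hgdef, hVmem]
      have hgr : g (GE.ranU x) = 0 := by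
        have : GE.ranU x ∉ V := fun hm =>
          Set.disjoint_left.mp hdisj (hVsub hm).1 hr
        simp [hgdef, this]
      rw [hgs, hgr] at heq
      simp at heq
      exact hx heq
    -- now: support f ⊆ interior isoSet
    intro x hx
    have hW : IsOpen (f ⁻¹' {f x}) := hf.1 {f x}
    have hWsub : f ⁻¹' {f x} ⊆ GE.isoSet C := by
      intro y hy
      apply hiso
      have : f y = f x := hy
      simpa [Function.mem_support, this] using hx
    exact mem_interior.mpr ⟨f ⁻¹' {f x}, hWsub, hW, rfl⟩
  · rintro ⟨hf, hsupp⟩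
    refine ⟨hf, ?_⟩
    intro g hg
    funext x
    rw [GE.conv_diag_right R f g hg.2 x, GE.conv_diag_left R f g hg.2 x]
    by_cases hfx : f x = 0
    · rw [hfx, zero_mul, mul_zero]
    · have hxi : x ∈ GE.isoSet C := interior_subset (hsupp hfx)
      have : GE.srcU x = GE.ranU x := hxi
      rw [this, mul_comm]
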